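/- Suppose a feeder link satisfies SINR ≥ (C/N)/(1 + I_th) for some I_th > 0, SINR > 1, and C/N > 2. Then the capacity degradation ΔR = 1 − log₂(1+SINR)/log₂(1+C/N) satisfies ΔR ≤ log_{C/N}(1 + I_th), i.e., ΔR ≤ ln(1+I_th)/ln(C/N). -/

import Mathlib

/-!
Since `SINR·(1 + I_th) ≥ C/N`, we get `(1 + I_th)(1 + SINR) ≥ 1 + C/N`, so taking logarithms
`ln(1 + C/N) ≤ ln(1 + I_th) + ln(1 + SINR)`. Dividing by `ln(1 + C/N)` gives
`ΔR ≤ ln(1 + I_th)/ln(1 + C/N)`, and shrinking the denominator to `ln(C/N)` only enlarges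
the bound.
-/

open Real

theorem Real.logb_div_logb_eq_log_div_log {b x y : ℝ} (hb : log b ≠ 0) :
    logb b x / logb b y = log x / log y :=
  div_div_div_cancel_right₀ hb _ _

theorem Real.log_one_add_le_log_one_add_add_log_one_add {s t x : ℝ} (ht : 0 ≤ t) (hs : -1 < s)
    (hx₀ : -1 < x) (hx : x ≤ s * (1 + t)) :
    log (1 + x) ≤ log (1 + t) + log (1 + s) := by
  have hmul : 1 + x ≤ (1 + t) * (1 + s) := by nlinarith
  calc log (1 + x) ≤ log ((1 + t) * (1 + s)) := log_le_log (by linarith) hmul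
    _ = log (1 + t) + log (1 + s) := log_mul (by linarith) (by linarith)

theorem one_sub_div_le_div_of_le_add {K : Type*} [Field K] [LinearOrder K] [IsStrictOrderedRing K]
    {a b c : K} (hb : 0 < b) (h : b ≤ a + c) :
    1 - c / b ≤ a / b := by
  rw [one_sub_div hb.ne']
  gcongr
  linarith

theorem stmt_5_general (sinr cn ith : ℝ) (hith : 0 < ith) (hcn : 2 < cn)
    (hreg : cn / (1 + ith) ≤ sinr) :
    1 - Real.logb 2 (1 + sinr) / Real.logb 2 (1 + cn) ≤
      Real.log (1 + ith) / Real.log cn := by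
  rw [logb_div_logb_eq_log_div_log (by positivity)]
  have hsinr_pos : 0 < sinr := (div_pos (by linarith) (by linarith)).trans_le hreg
  have hcn_le : cn ≤ sinr * (1 + ith) := (div_le_iff₀ (by linarith)).mp hreg
  have hlog_cn : 0 < log cn := log_pos (by linarith)
  calc 1 - log (1 + sinr) / log (1 + cn) ≤ log (1 + ith) / log (1 + cn) :=
        one_sub_div_le_div_of_le_add (log_pos (by linarith))
          (log_one_add_le_log_one_add_add_log_one_add hith.le (by linarith) (by linarith) hcn_le)
    _ ≤ log (1 + ith) / log cn :=
        div_le_div_of_nonneg_left (log_nonneg (by linarith)) hlog_cn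
          (log_le_log (by linarith) (by linarith))

/-- If a feeder link satisfies `SINR ≥ (C/N)/(1+I_th)` with `I_th > 0`, `SINR > 1`
and `C/N > 2`, then the capacity degradation
`ΔR = 1 − log₂(1+SINR)/log₂(1+C/N)` satisfies
`ΔR ≤ log_{C/N}(1+I_th) = ln(1+I_th)/ln(C/N)`. -/
theorem stmt_5 (sinr cn ith : ℝ) (hith : 0 < ith) (hsinr : 1 < sinr) (hcn : 2 < cn)
    (hreg : cn / (1 + ith) ≤ sinr) :
    1 - Real.logb 2 (1 + sinr) / Real.logb 2 (1 + cn) ≤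
      Real.log (1 + ith) / Real.log cn :=
  stmt_5_general sinr cn ith hith hcn hreg
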